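/- Let L > 1 and let ε > 0, δ > 0 and μ ∈ ℝ satisfy dist(μ, ℤ) ≥ δ. Then ∑_{k ∈ ℤ} (1 + |k + μ|/ε)^{−L} ≤ (1 + δ/ε)^{−L} + 2ε ∫_ℝ (1 + |y|)^{−L} dy. -/

import Mathlib

open Real MeasureTheory Set Function

/-!
Put `f y = (1 + |y|/ε)^(-L)`, which decreases in `|y|`. Among the points `k + μ` the one nearest
to `0` is `μ - round μ`, and it contributes at most `(1 + δ/ε)^(-L)`. Every other point `x` has
`|x| ≥ 1/2`, so `f x` is at most twice the integral of `f` over the half-unit interval next to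
`x` on the side facing `0`; these intervals are pairwise disjoint, so the remaining terms sum to
at most `2 ∫ f = 2ε ∫ (1 + |y|)^(-L)`.
-/

def halfStepTowardZero (x : ℝ) : Set ℝ :=
  if 0 < x then Ioo (x - 1 / 2) x else Ioo x (x + 1 / 2)

lemma halfStepTowardZero_subset (x : ℝ) :
    halfStepTowardZero x ⊆ Ioo (x - 1 / 2) (x + 1 / 2) := by
  unfold halfStepTowardZero
  split_ifs
  · exact Ioo_subset_Ioo_right (by linarith)
  · exact Ioo_subset_Ioo_left (by linarith)

lemma measurableSet_halfStepTowardZero (x : ℝ) : MeasurableSet (halfStepTowardZero x) := by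
  unfold halfStepTowardZero
  split_ifs <;> exact measurableSet_Ioo

lemma volume_halfStepTowardZero (x : ℝ) :
    volume (halfStepTowardZero x) = ENNReal.ofReal (1 / 2) := by
  unfold halfStepTowardZero
  split_ifs <;> simp [Real.volume_Ioo]

lemma abs_le_of_mem_halfStepTowardZero {x y : ℝ} (hx : 1 / 2 ≤ |x|)
    (hy : y ∈ halfStepTowardZero x) : |y| ≤ |x| := by
  unfold halfStepTowardZero at hy
  split_ifs at hy with h
  · rw [abs_of_pos h] at hx ⊢
    exact abs_le.2 ⟨by linarith [hy.1], hy.2.le⟩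
  · rw [abs_of_nonpos (not_lt.1 h)] at hx ⊢
    exact abs_le.2 ⟨by linarith [hy.1], by linarith [hy.2]⟩

lemma pairwise_disjoint_halfStepTowardZero_int_add (μ : ℝ) :
    Pairwise (Disjoint on fun k : ℤ => halfStepTowardZero (k + μ)) := by
  refine (pairwise_disjoint_Ioo_add_intCast (μ - 1 / 2)).mono fun k l h => ?_
  refine h.mono (fun y hy => ?_) (fun y hy => ?_) <;>
  · have := halfStepTowardZero_subset _ hy
    constructor <;> linarith [this.1, this.2]

lemma half_le_abs_int_add_of_ne {μ : ℝ} {k : ℤ} (hk : k ≠ -round μ) : 1 / 2 ≤ |k + μ| := by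
  by_contra! h
  have hround := abs_sub_round μ
  have : |((k + round μ : ℤ) : ℝ)| < 1 := by
    push_cast
    calc |(k : ℝ) + round μ| = |(k + μ) - (μ - round μ)| := by ring_nf
      _ ≤ |(k : ℝ) + μ| + |μ - round μ| := abs_sub _ _
      _ < 1 := by linarith
  have : k + round μ = 0 := by exact_mod_cast Int.abs_lt_one_iff.1 (by exact_mod_cast this)
  omega

lemma le_two_mul_setIntegral_halfStepTowardZero {g : ℝ → ℝ}
    (hg_anti : ∀ a b : ℝ, |a| ≤ |b| → g b ≤ g a) {x : ℝ} (hx : 1 / 2 ≤ |x|)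
    (hg_int : IntegrableOn g (halfStepTowardZero x)) :
    g x ≤ 2 * ∫ y in halfStepTowardZero x, g y := by
  have := setIntegral_ge_of_const_le_real (measurableSet_halfStepTowardZero x)
    (by simp [volume_halfStepTowardZero])
    (fun y hy => hg_anti y x (abs_le_of_mem_halfStepTowardZero hx hy)) hg_int
  rw [measureReal_def, volume_halfStepTowardZero, ENNReal.toReal_ofReal (by norm_num)] at this
  linarith

lemma sum_int_add_le_two_mul_integral {g : ℝ → ℝ} (hg_nonneg : ∀ y, 0 ≤ g y)
    (hg_anti : ∀ a b : ℝ, |a| ≤ |b| → g b ≤ g a) (hg_int : Integrable g) (μ : ℝ) (s : Finset ℤ)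
    (hs : ∀ k ∈ s, 1 / 2 ≤ |k + μ|) :
    ∑ k ∈ s, g (k + μ) ≤ 2 * ∫ y, g y :=
  calc ∑ k ∈ s, g (k + μ)
      ≤ ∑ k ∈ s, 2 * ∫ y in halfStepTowardZero (k + μ), g y :=
        Finset.sum_le_sum fun k hk =>
          le_two_mul_setIntegral_halfStepTowardZero hg_anti (hs k hk) hg_int.integrableOn
    _ = 2 * ∫ y in ⋃ k ∈ s, halfStepTowardZero (k + μ), g y := by
        rw [← Finset.mul_sum, integral_biUnion_finset _
          (fun k _ => measurableSet_halfStepTowardZero _)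
          (fun k _ l _ hkl => pairwise_disjoint_halfStepTowardZero_int_add μ hkl)
          (fun k _ => hg_int.integrableOn)]
    _ ≤ 2 * ∫ y, g y := by
        gcongr 2 * ?_
        exact setIntegral_le_integral hg_int (.of_forall hg_nonneg)

theorem tsum_int_add_le {g : ℝ → ℝ} (hg_nonneg : ∀ y, 0 ≤ g y)
    (hg_anti : ∀ a b : ℝ, |a| ≤ |b| → g b ≤ g a) (hg_int : Integrable g) (μ : ℝ) :
    ∑' k : ℤ, g (k + μ) ≤ g (μ - round μ) + 2 * ∫ y, g y := by
  have hnearest : g ((-round μ : ℤ) + μ) = g (μ - round μ) := by push_cast; ring_nf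
  refine tsum_le_of_sum_le' (add_nonneg (hg_nonneg _) (mul_nonneg zero_le_two
    (integral_nonneg hg_nonneg))) fun s => ?_
  calc ∑ k ∈ s, g (k + μ)
      ≤ ∑ k ∈ insert (-round μ) s, g (k + μ) :=
        Finset.sum_le_sum_of_subset_of_nonneg (Finset.subset_insert _ _)
          fun _ _ _ => hg_nonneg _
    _ = g (μ - round μ) + ∑ k ∈ s.erase (-round μ), g (k + μ) := by
        rw [← Finset.add_sum_erase _ _ (Finset.mem_insert_self _ _), Finset.erase_insert_eq_erase,
          hnearest]
    _ ≤ g (μ - round μ) + 2 * ∫ y, g y := by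
        gcongr
        exact sum_int_add_le_two_mul_integral hg_nonneg hg_anti hg_int μ _
          fun k hk => half_le_abs_int_add_of_ne (Finset.ne_of_mem_erase hk)

lemma integrable_one_add_abs_div_rpow_neg {L ε : ℝ} (hL : 1 < L) (hε : 0 < ε) :
    Integrable fun y : ℝ => (1 + |y| / ε) ^ (-L) := by
  have h : Integrable fun y : ℝ => (1 + ‖y‖) ^ (-L) :=
    integrable_one_add_norm (by simpa using hL)
  simpa [abs_div, abs_of_pos hε] using h.comp_div hε.ne'

lemma integral_one_add_abs_div_rpow_neg (L : ℝ) {ε : ℝ} (hε : 0 < ε) :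
    ∫ y : ℝ, (1 + |y| / ε) ^ (-L) = ε * ∫ y : ℝ, (1 + |y|) ^ (-L) := by
  simpa [abs_div, abs_of_pos hε] using
    Measure.integral_comp_div (fun y : ℝ => (1 + |y|) ^ (-L)) ε

theorem sum_translates_bound (L ε δ μ : ℝ) (hL : 1 < L) (hε : 0 < ε) (hδ : 0 < δ)
    (hμ : ∀ m : ℤ, δ ≤ |μ - m|) :
    (∑' k : ℤ, (1 + |(k : ℝ) + μ| / ε) ^ (-L))
      ≤ (1 + δ / ε) ^ (-L) + 2 * ε * ∫ y : ℝ, (1 + |y|) ^ (-L) := by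
  have hanti : ∀ a b : ℝ, |a| ≤ |b| → (1 + |b| / ε) ^ (-L) ≤ (1 + |a| / ε) ^ (-L) :=
    fun a b hab => rpow_le_rpow_of_nonpos (by positivity) (by gcongr) (by linarith)
  have hnearest : (1 + |μ - round μ| / ε) ^ (-L) ≤ (1 + δ / ε) ^ (-L) :=
    rpow_le_rpow_of_nonpos (by positivity) (by gcongr; exact hμ _) (by linarith)
  calc (∑' k : ℤ, (1 + |(k : ℝ) + μ| / ε) ^ (-L))
      ≤ (1 + |μ - round μ| / ε) ^ (-L) + 2 * ∫ y : ℝ, (1 + |y| / ε) ^ (-L) :=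
        tsum_int_add_le (fun y => by positivity) hanti (integrable_one_add_abs_div_rpow_neg hL hε) μ
    _ ≤ (1 + δ / ε) ^ (-L) + 2 * ε * ∫ y : ℝ, (1 + |y|) ^ (-L) := by
        rw [integral_one_add_abs_div_rpow_neg L hε, ← mul_assoc]
        gcongr
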